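/- arXiv:2107.11474 — 2 statements merged into one kernel-verified Lean document; each statement's English description precedes it below -/
import Mathlib

section
/- Every exact symmetric unitary t-design requires at least d_Sym² unitaries, where d_Sym = C(d+t−1, t): if ∑_{k=1}^{n} w_k U_k^{⊗t} ρ (U_k†)^{⊗t} = τ_Sym for all density operators ρ on Sym(d^t) with w_k > 0, then n ≥ d_Sym². -/
open Matrix ComplexOrder

/-- The `t`-fold tensor power `U^{⊗t}` of a `d × d` matrix `U`. -/
noncomputable def tpow (d t : ℕ) (U : Matrix (Fin d) (Fin d) ℂ) :
    Matrix (Fin t → Fin d) (Fin t → Fin d) ℂ :=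
  Matrix.of fun x y => ∏ i, U (x i) (y i)

/-- The permutation operator `P(π)` on `(ℂ^d)^{⊗t}`. -/
noncomputable def permMatrix (d t : ℕ) (π : Equiv.Perm (Fin t)) :
    Matrix (Fin t → Fin d) (Fin t → Fin d) ℂ :=
  Matrix.of fun x y => if x = y ∘ ⇑π⁻¹ then 1 else 0

/-- The projector `Π_Sym` onto the symmetric subspace of `(ℂ^d)^{⊗t}`. -/
noncomputable def symProj (d t : ℕ) : Matrix (Fin t → Fin d) (Fin t → Fin d) ℂ :=
  ((Nat.factorial t : ℂ))⁻¹ • ∑ π : Equiv.Perm (Fin t), permMatrix d t π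

/-!
Write `Φ X = ∑ₖ wₖ Aₖ X Aₖ†` with `Aₖ = Uₖ^{⊗t}`, and `P = Π_Sym`. The design identity holds for
all density operators supported on `Sym(d^t)`; by linearity and polarization it extends to
`Φ (P X P) = tr (P X) · P / d_Sym` for every `X`. Hence the Choi matrix of `X ↦ Φ (P X P)` is
`Pᵀ ⊗ P / d_Sym`, of rank `(rank P)²`, while its Kraus operators `Aₖ P` exhibit it as a sum of
`n` rank-one matrices. Finally, `Φ` preserves traces, so applying the identity to `X = P` forces
`tr P = d_Sym`: the dimension of the symmetric subspace is read off the design itself.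
-/

open scoped Kronecker

namespace Matrix

variable {m K : Type*} [Fintype m] [Field K]

theorem rank_add_le (A B : Matrix m m K) : (A + B).rank ≤ A.rank + B.rank := by
  rw [rank, rank, rank, mulVecLin_add]
  refine (Submodule.finrank_mono ?_).trans (Submodule.finrank_add_le_finrank_add_finrank _ _)
  rintro _ ⟨x, rfl⟩
  exact Submodule.add_mem_sup ⟨x, rfl⟩ ⟨x, rfl⟩

theorem rank_sum_vecMulVec_le {ι : Type*} (s : Finset ι) (u v : ι → m → K) :
    (∑ k ∈ s, vecMulVec (u k) (v k)).rank ≤ s.card := by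
  calc (∑ k ∈ s, vecMulVec (u k) (v k)).rank ≤ ∑ k ∈ s, (vecMulVec (u k) (v k)).rank :=
        Finset.le_sum_of_subadditive (fun A : Matrix m m K => A.rank) rank_zero.le rank_add_le _ _
    _ ≤ ∑ k ∈ s, 1 := Finset.sum_le_sum fun k _ => rank_vecMulVec_le (u k) (v k)
    _ = s.card := by simp

variable [DecidableEq m]

theorem rank_eq_trace_of_isIdempotentElem {P : Matrix m m K} (hP : IsIdempotentElem P) :
    (P.rank : K) = P.trace := by
  have hproj : IsIdempotentElem (toLin' P) := hP.map toLinAlgEquiv'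
  rw [← trace_toLin'_eq, LinearMap.IsProj.trace (LinearMap.IsIdempotentElem.isProj_range _ hproj)]
  rfl

theorem trace_eq_zero_iff_of_isIdempotentElem [CharZero K] {P : Matrix m m K}
    (hP : IsIdempotentElem P) : P.trace = 0 ↔ P = 0 := by
  have hproj : IsIdempotentElem (toLin' P) := hP.map toLinAlgEquiv'
  rw [← trace_toLin'_eq, LinearMap.IsIdempotentElem.trace_eq_zero_iff hproj,
    LinearEquiv.map_eq_zero_iff]

theorem rank_transpose_kronecker_self_of_isIdempotentElem [CharZero K] {P : Matrix m m K}
    (hP : IsIdempotentElem P) : (Pᵀ ⊗ₖ P).rank = P.rank ^ 2 := by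
  have hPP : IsIdempotentElem (Pᵀ ⊗ₖ P) := by
    rw [IsIdempotentElem, ← mul_kronecker_mul, ← transpose_mul, hP.eq]
  have := rank_eq_trace_of_isIdempotentElem hPP
  rw [trace_kronecker, trace_transpose, ← rank_eq_trace_of_isIdempotentElem hP] at this
  exact_mod_cast this.trans (sq _).symm

end Matrix

section Choi

variable {m K : Type*} [Fintype m] [DecidableEq m] [Field K]

/-- The Choi matrix `∑ᵢⱼ Eᵢⱼ ⊗ Φ(Eᵢⱼ)`. -/
def choiMatrix (Φ : Matrix m m K →ₗ[K] Matrix m m K) : Matrix (m × m) (m × m) K :=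
  of fun p q => Φ (single p.1 q.1 1) p.2 q.2

theorem choiMatrix_mulLeftRight (A B : Matrix m m K) :
    choiMatrix (LinearMap.mulLeftRight K (A, B)) = vecMulVec (vec A) (vec Bᵀ) := by
  ext ⟨j, i⟩ ⟨j', i'⟩
  simp [choiMatrix, vec, vecMulVec_apply, mul_apply, single_apply, ite_and]

theorem rank_choiMatrix_sum_mulLeftRight_le {ι : Type*} (s : Finset ι) (w : ι → K)
    (A B : ι → Matrix m m K) :
    (choiMatrix (∑ k ∈ s, w k • LinearMap.mulLeftRight K (A k, B k))).rank ≤ s.card := by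
  have : choiMatrix (∑ k ∈ s, w k • LinearMap.mulLeftRight K (A k, B k)) =
      ∑ k ∈ s, vecMulVec (w k • vec (A k)) (vec (B k)ᵀ) := by
    simp only [smul_vecMulVec, ← choiMatrix_mulLeftRight]
    ext
    simp [choiMatrix, Matrix.sum_apply]
  exact this ▸ rank_sum_vecMulVec_le s _ _

theorem choiMatrix_eq_kronecker {Φ : Matrix m m K →ₗ[K] Matrix m m K} {M N : Matrix m m K}
    (h : ∀ X, Φ X = (N * X).trace • M) : choiMatrix Φ = Nᵀ ⊗ₖ M := by
  ext ⟨j, i⟩ ⟨j', i'⟩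
  simp [choiMatrix, h, trace_mul_single]

end Choi

theorem trace_sum_smul_mulLeftRight_conjTranspose {m R ι : Type*} [Fintype m] [DecidableEq m]
    [CommRing R] [StarRing R] (s : Finset ι) {w : ι → R} (hw : ∑ k ∈ s, w k = 1)
    {A : ι → Matrix m m R} (hA : ∀ k, A k ∈ unitaryGroup m R) (X : Matrix m m R) :
    ((∑ k ∈ s, w k • LinearMap.mulLeftRight R (A k, (A k)ᴴ)) X).trace = X.trace := by
  have hconj (k : ι) : (A k * X * (A k)ᴴ).trace = X.trace := by
    rw [trace_mul_cycle, ← star_eq_conjTranspose, mem_unitaryGroup_iff'.mp (hA k), one_mul]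
  simp [LinearMap.sum_apply, trace_sum, hconj, ← Finset.sum_mul, hw]

section Polarization

open Complex

variable {m : Type*} [Fintype m]

theorem vecMulVec_star_polarization (u v : m → ℂ) :
    vecMulVec u (star v) = (4 : ℂ)⁻¹ • ∑ k : Fin 4,
      I ^ (k : ℕ) • vecMulVec (u + I ^ (k : ℕ) • v) (star (u + I ^ (k : ℕ) • v)) := by
  ext a b
  simp only [vecMulVec_apply, Pi.star_apply, RCLike.star_def, star_add, star_smul, star_pow, conj_I,
    Fin.sum_univ_four, Fin.isValue, Fin.coe_ofNat_eq_mod, Nat.zero_mod, pow_zero, one_smul,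
    Nat.one_mod, pow_one, neg_smul, Nat.reduceMod, I_sq, even_two, Even.neg_pow, Nat.mod_succ,
    I_pow_three, Matrix.smul_apply, Matrix.add_apply, Pi.add_apply, Pi.smul_apply, smul_eq_mul,
    Pi.neg_apply, Matrix.neg_apply]
  linear_combination ((I ^ 3 * v a - (I ^ 2 - 2) * u a) * starRingEnd ℂ (v b) / 4
    - v a * starRingEnd ℂ (u b) / 2) * I_sq

variable {N : Type*} [AddCommGroup N] [Module ℂ N]

theorem LinearMap.map_vecMulVec_star_eq_zero (F : Matrix m m ℂ →ₗ[ℂ] N) {S : Submodule ℂ (m → ℂ)}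
    (hF : ∀ ψ ∈ S, F (vecMulVec ψ (star ψ)) = 0) {u v : m → ℂ} (hu : u ∈ S) (hv : v ∈ S) :
    F (vecMulVec u (star v)) = 0 := by
  rw [vecMulVec_star_polarization, map_smul, map_sum]
  simp only [map_smul, hF _ (S.add_mem hu (S.smul_mem _ hv)), smul_zero, Finset.sum_const_zero]

variable (Φ : Matrix m m ℂ →ₗ[ℂ] N) {P : Matrix m m ℂ} {M : N}

theorem LinearMap.map_eq_trace_smul_of_posSemidef
    (hΦ : ∀ ρ : Matrix m m ℂ, ρ.PosSemidef → ρ.trace = 1 → P * ρ * P = ρ → Φ ρ = M)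
    {X : Matrix m m ℂ} (hX : X.PosSemidef) (hPX : P * X * P = X) : Φ X = X.trace • M := by
  by_cases h0 : X.trace = 0
  · simp [hX.trace_eq_zero_iff.1 h0]
  · have hρ := hΦ (X.trace⁻¹ • X) (hX.smul (inv_nonneg.2 hX.trace_nonneg))
      (by rw [trace_smul, smul_eq_mul, inv_mul_cancel₀ h0])
      (by rw [Matrix.mul_smul, Matrix.smul_mul, hPX])
    rw [← hρ, map_smul, smul_smul, mul_inv_cancel₀ h0, one_smul]

theorem LinearMap.map_sandwich_eq_trace_smul [DecidableEq m] (hP : P.IsHermitian)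
    (hPP : IsIdempotentElem P)
    (hΦ : ∀ ρ : Matrix m m ℂ, ρ.PosSemidef → ρ.trace = 1 → P * ρ * P = ρ → Φ ρ = M)
    (X : Matrix m m ℂ) : Φ (P * X * P) = (P * X * P).trace • M := by
  have sandwich_vecMulVec (u v : m → ℂ) :
      P * vecMulVec u (star v) * P = vecMulVec (P *ᵥ u) (star (P *ᵥ v)) := by
    conv_lhs => arg 2; rw [← hP.eq]
    rw [mul_vecMulVec, vecMulVec_mul, ← star_mulVec]
  let F := Φ - (traceLinearMap m ℂ ℂ).smulRight M
  have hF : ∀ ψ ∈ LinearMap.range (toLin' P), F (vecMulVec ψ (star ψ)) = 0 := by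
    rintro _ ⟨φ, rfl⟩
    have hψ : P *ᵥ toLin' P φ = toLin' P φ := by
      rw [toLin'_apply, mulVec_mulVec, hPP.eq]
    have hsupp := sandwich_vecMulVec (toLin' P φ) (toLin' P φ)
    rw [hψ] at hsupp
    rw [LinearMap.sub_apply, LinearMap.smulRight_apply, traceLinearMap_apply, sub_eq_zero]
    exact Φ.map_eq_trace_smul_of_posSemidef hΦ (posSemidef_vecMulVec_self_star _) hsupp
  suffices F (P * X * P) = 0 by simpa [F, sub_eq_zero] using this
  induction X using Matrix.induction_on' with
  | h_zero => simp
  | h_add X Y hX hY => simp only [mul_add, add_mul, map_add, hX, hY, add_zero]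
  | h_std_basis i j x =>
    have hsingle : Matrix.single i j x = x • vecMulVec (Pi.single i 1) (star (Pi.single j 1)) := by
      rw [Pi.star_single, star_one, ← single_eq_single_vecMulVec_single, smul_single, smul_eq_mul,
        mul_one]
    rw [hsingle, Matrix.mul_smul, Matrix.smul_mul, sandwich_vecMulVec, map_smul]
    exact smul_eq_zero_of_right x (F.map_vecMulVec_star_eq_zero hF ⟨_, rfl⟩ ⟨_, rfl⟩)

end Polarization

section SymmetricSubspace

variable (d t : ℕ)

theorem tpow_mul (A B : Matrix (Fin d) (Fin d) ℂ) :
    tpow d t A * tpow d t B = tpow d t (A * B) := by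
  ext x y
  simp only [tpow, mul_apply, of_apply, Fintype.prod_sum, Finset.prod_mul_distrib]

theorem tpow_one : tpow d t 1 = 1 := by
  ext x y
  simp only [tpow, of_apply, one_apply]
  by_cases h : x = y
  · simp [h]
  · obtain ⟨i, hi⟩ := Function.ne_iff.mp h
    rw [if_neg h]
    exact Finset.prod_eq_zero (Finset.mem_univ i) (if_neg hi)

theorem tpow_conjTranspose (A : Matrix (Fin d) (Fin d) ℂ) : tpow d t Aᴴ = (tpow d t A)ᴴ := by
  ext x y
  simp only [tpow, conjTranspose_apply, of_apply, star_prod]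

theorem tpow_mem_unitaryGroup {U : Matrix (Fin d) (Fin d) ℂ} (hU : U ∈ unitaryGroup (Fin d) ℂ) :
    tpow d t U ∈ unitaryGroup (Fin t → Fin d) ℂ := by
  rw [mem_unitaryGroup_iff', star_eq_conjTranspose, ← tpow_conjTranspose, tpow_mul,
    ← star_eq_conjTranspose, mem_unitaryGroup_iff'.mp hU, tpow_one]

theorem permMatrix_mul (π σ : Equiv.Perm (Fin t)) :
    permMatrix d t π * permMatrix d t σ = permMatrix d t (π * σ) := by
  ext x y
  rw [mul_apply, Finset.sum_eq_single (y ∘ ⇑σ⁻¹)]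
  · simp only [permMatrix, of_apply, _root_.mul_inv_rev, Equiv.Perm.coe_mul, Function.comp_assoc,
      if_true, mul_one]
  · intro z _ hz
    simp [permMatrix, show z ≠ y ∘ ⇑σ.symm from hz]
  · simp

theorem permMatrix_conjTranspose (π : Equiv.Perm (Fin t)) :
    (permMatrix d t π)ᴴ = permMatrix d t π⁻¹ := by
  ext x y
  have : y = x ∘ ⇑π⁻¹ ↔ x = y ∘ ⇑π := by
    constructor <;> rintro rfl <;> funext i <;> simp
  simp only [permMatrix, conjTranspose_apply, of_apply, inv_inv, this]
  split_ifs <;> simp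

theorem symProj_isHermitian : (symProj d t).IsHermitian := by
  simp only [IsHermitian, symProj, conjTranspose_smul, conjTranspose_sum, permMatrix_conjTranspose,
    star_inv₀, star_natCast]
  congr 1
  exact Fintype.sum_equiv (Equiv.inv _) _ _ fun _ => rfl

theorem symProj_mul_permMatrix (σ : Equiv.Perm (Fin t)) :
    symProj d t * permMatrix d t σ = symProj d t := by
  simp only [symProj, Matrix.smul_mul, Finset.sum_mul, permMatrix_mul]
  congr 1
  exact Fintype.sum_equiv (Equiv.mulRight σ) _ _ fun _ => rfl

theorem symProj_isIdempotentElem : IsIdempotentElem (symProj d t) := by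
  rw [IsIdempotentElem]
  nth_rewrite 2 [symProj]
  rw [Matrix.mul_smul, Finset.mul_sum]
  simp only [symProj_mul_permMatrix, Finset.sum_const, Finset.card_univ, Fintype.card_perm,
    Fintype.card_fin, ← Nat.cast_smul_eq_nsmul ℂ, smul_smul]
  rw [inv_mul_cancel₀ (by exact_mod_cast t.factorial_ne_zero), one_smul]

theorem symProj_ne_zero [Nonempty (Fin t → Fin d)] : symProj d t ≠ 0 := by
  obtain ⟨x⟩ := ‹Nonempty (Fin t → Fin d)›
  intro h
  have := congrFun (congrFun h x) x
  simp [symProj, permMatrix, Matrix.sum_apply, Finset.sum_boole, Nat.factorial_ne_zero] at this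
  exact @this 1 rfl

variable {d t}

theorem nonempty_fun_of_choose_ne_zero (h : (d + t - 1).choose t ≠ 0) :
    Nonempty (Fin t → Fin d) := by
  obtain rfl | ht := Nat.eq_zero_or_pos t
  · exact ⟨Fin.elim0⟩
  · have hd : 0 < d := by
      by_contra! hd
      obtain rfl : d = 0 := by omega
      exact h (Nat.choose_eq_zero_of_lt (by omega))
    exact ⟨fun _ => ⟨0, hd⟩⟩

end SymmetricSubspace

theorem symmetric_design_lower_bound_general (d t n : ℕ)
    (w : Fin n → ℝ) (hw1 : ∑ k, w k = 1)
    (U : Fin n → Matrix.unitaryGroup (Fin d) ℂ)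
    (hdesign : ∀ ρ : Matrix (Fin t → Fin d) (Fin t → Fin d) ℂ,
      ρ.PosSemidef → ρ.trace = 1 → symProj d t * ρ * symProj d t = ρ →
      ∑ k, (w k : ℂ) • (tpow d t (U k) * ρ * tpow d t (((U k : Matrix (Fin d) (Fin d) ℂ))ᴴ))
        = ((Nat.choose (d + t - 1) t : ℂ))⁻¹ • symProj d t) :
    (Nat.choose (d + t - 1) t) ^ 2 ≤ n := by
  set c := Nat.choose (d + t - 1) t
  obtain hc | hc := eq_or_ne c 0
  · simp [hc]
  have : Nonempty (Fin t → Fin d) := nonempty_fun_of_choose_ne_zero hc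
  set P := symProj d t
  have hP : IsIdempotentElem P := symProj_isIdempotentElem d t
  set A := fun k => tpow d t (U k)
  set Φ := ∑ k, (w k : ℂ) • LinearMap.mulLeftRight ℂ (A k, (A k)ᴴ)
  have hsandwich (X) : Φ (P * X * P) = (P * X).trace • ((c : ℂ)⁻¹ • P) := by
    rw [Φ.map_sandwich_eq_trace_smul (symProj_isHermitian d t) hP, trace_mul_cycle, hP.eq]
    intro ρ h1 h2 h3
    simpa [Φ, A, LinearMap.sum_apply, tpow_conjTranspose] using hdesign ρ h1 h2 h3
  have hrank : P.rank = c := by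
    have htrace : (Φ P).trace = P.trace := trace_sum_smul_mulLeftRight_conjTranspose Finset.univ
      (by exact_mod_cast hw1) (fun k => tpow_mem_unitaryGroup d t (U k).2) P
    have hΦP : Φ P = P.trace • ((c : ℂ)⁻¹ • P) := by simpa [hP.eq] using hsandwich 1
    rw [hΦP, trace_smul, trace_smul, smul_eq_mul, smul_eq_mul] at htrace
    have hne : P.trace ≠ 0 := (trace_eq_zero_iff_of_isIdempotentElem hP).not.2 (symProj_ne_zero d t)
    have hcP : (c : ℂ)⁻¹ * P.trace = 1 := mul_left_cancel₀ hne (htrace.trans (mul_one _).symm)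
    exact_mod_cast (rank_eq_trace_of_isIdempotentElem hP).trans
      ((inv_mul_eq_one₀ (by exact_mod_cast hc)).1 hcP).symm
  have hkraus : Φ ∘ₗ LinearMap.mulLeftRight ℂ (P, P) =
      ∑ k, (w k : ℂ) • LinearMap.mulLeftRight ℂ (A k * P, P * (A k)ᴴ) := by
    ext1 X
    simp [Φ, LinearMap.sum_apply, mul_assoc]
  have hchoi : choiMatrix (Φ ∘ₗ LinearMap.mulLeftRight ℂ (P, P)) = (c : ℂ)⁻¹ • (Pᵀ ⊗ₖ P) := by
    rw [choiMatrix_eq_kronecker (fun X => hsandwich X), kronecker_smul]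
  calc c ^ 2 = (Pᵀ ⊗ₖ P).rank := by rw [rank_transpose_kronecker_self_of_isIdempotentElem hP, hrank]
    _ = (choiMatrix (Φ ∘ₗ LinearMap.mulLeftRight ℂ (P, P))).rank := by
      rw [hchoi, rank_smul_of_mem_nonZeroDivisors _ (mem_nonZeroDivisors_of_ne_zero (by simpa))]
    _ ≤ n := by
      rw [hkraus]
      simpa using rank_choiMatrix_sum_mulLeftRight_le Finset.univ (fun k => (w k : ℂ))
        (fun k => A k * P) (fun k => P * (A k)ᴴ)

/-- Every exact symmetric unitary `t`-design requires at least `d_Sym²` unitaries, where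
`d_Sym = C(d+t−1, t)`: if `∑_k w_k U_k^{⊗t} ρ (U_k†)^{⊗t} = τ_Sym` for all density
operators `ρ` on `Sym(d^t)`, with all `w_k > 0`, then `n ≥ d_Sym²`. -/
theorem symmetric_design_lower_bound (d t n : ℕ)
    (w : Fin n → ℝ) (hw0 : ∀ k, 0 < w k) (hw1 : ∑ k, w k = 1)
    (U : Fin n → Matrix.unitaryGroup (Fin d) ℂ)
    (hdesign : ∀ ρ : Matrix (Fin t → Fin d) (Fin t → Fin d) ℂ,
      ρ.PosSemidef → ρ.trace = 1 → symProj d t * ρ * symProj d t = ρ →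
      ∑ k, (w k : ℂ) • (tpow d t (U k) * ρ * tpow d t (((U k : Matrix (Fin d) (Fin d) ℂ))ᴴ))
        = ((Nat.choose (d + t - 1) t : ℂ))⁻¹ • symProj d t) :
    (Nat.choose (d + t - 1) t) ^ 2 ≤ n :=
  symmetric_design_lower_bound_general d t n w hw1 U hdesign
end

section
/- Any quantum channel on a D-dimensional system of the form Φ(ρ) = ∑_{k=1}^n w_k V_k ρ V_k† with unitaries V_k and weights w_k > 0 summing to 1, which maps every density operator to the maximally mixed state I/D, must satisfy n ≥ D². -/
/-!
Since density matrices span all matrices, a linear map sending every density matrix to `I/D`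
sends every `X` to `trace X • I/D`. Evaluated at the matrix unit `E_{jj'}` this reads
`∑ k, w k * V k i j * conj (V k i' j') = δ_{ii'} δ_{jj'} / D`, i.e. `A * diag w * Aᴴ = D⁻¹ • 1`
for the `D² × n` matrix `A` whose `k`-th column is `V k` flattened. Hence
`D² = rank (A * diag w * Aᴴ) ≤ rank A ≤ n`.
-/

open Matrix ComplexOrder

namespace Matrix

variable {m p ι : Type*} [Fintype m] [DecidableEq m] [Fintype ι]

theorem card_le_card_of_mul_eq_smul_one {K : Type*} [Field K] {A : Matrix m ι K}
    {B : Matrix ι m K} {c : K} (hc : c ≠ 0) (h : A * B = c • 1) :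
    Fintype.card m ≤ Fintype.card ι :=
  calc Fintype.card m = (1 : Matrix m m K).rank := rank_one.symm
    _ = (A * (c⁻¹ • B)).rank := by
      rw [Matrix.mul_smul, h, smul_smul, inv_mul_cancel₀ hc, one_smul]
    _ ≤ A.rank := rank_mul_le_left _ _
    _ ≤ Fintype.card ι := rank_le_card_width A

theorem trace_single {α : Type*} [AddCommMonoid α] (j j' : m) (a : α) :
    (single j j' a).trace = if j = j' then a else 0 := by
  split_ifs with hj
  · rw [hj, trace_single_eq_same]
  · exact trace_single_eq_of_ne _ _ _ hj

open scoped MatrixOrder Matrix.Norms.L2Operator in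
theorem span_posSemidef : Submodule.span ℂ {X : Matrix m m ℂ | X.PosSemidef} = ⊤ := by
  simpa [nonneg_iff_posSemidef] using CStarAlgebra.span_nonneg (A := Matrix m m ℂ)

theorem apply_eq_trace_smul_of_density {M : Type*} [AddCommGroup M] [Module ℂ M]
    (f : Matrix m m ℂ →ₗ[ℂ] M) (σ : M)
    (hf : ∀ ρ : Matrix m m ℂ, ρ.PosSemidef → ρ.trace = 1 → f ρ = σ) (X : Matrix m m ℂ) :
    f X = X.trace • σ := by
  suffices f = (traceLinearMap m ℂ ℂ).smulRight σ from LinearMap.congr_fun this X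
  refine LinearMap.ext_on span_posSemidef fun ρ hρ => ?_
  change f ρ = ρ.trace • σ
  by_cases h0 : ρ.trace = 0
  · simp [hρ.trace_eq_zero_iff.1 h0]
  have hnormalized : f (ρ.trace⁻¹ • ρ) = σ :=
    hf _ (hρ.smul (inv_nonneg_of_nonneg hρ.trace_nonneg))
      (by rw [trace_smul, smul_eq_mul, inv_mul_cancel₀ h0])
  rw [← hnormalized, map_smul, smul_smul, mul_inv_cancel₀ h0, one_smul]

theorem mul_single_one_mul_conjTranspose_apply [Fintype p] (V : Matrix p m ℂ) (i i' : p)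
    (j j' : m) :
    (V * single j j' (1 : ℂ) * Vᴴ) i i' = V i j * star (V i' j') := by
  rw [single_eq_single_vecMulVec_single, mul_vecMulVec, vecMulVec_mul, vecMulVec_apply]
  simp

variable [Fintype p]

def weightedKrausMap (w : ι → ℂ) (V : ι → Matrix p m ℂ) : Matrix m m ℂ →ₗ[ℂ] Matrix p p ℂ where
  toFun X := ∑ k, w k • (V k * X * (V k)ᴴ)
  map_add' X Y := by
    simp only [Matrix.mul_add, Matrix.add_mul, smul_add, Finset.sum_add_distrib]
  map_smul' c X := by
    simp only [Matrix.mul_smul, Matrix.smul_mul, Finset.smul_sum, RingHom.id_apply, smul_comm c]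

def krausEntries (V : ι → Matrix p m ℂ) : Matrix (p × m) ι ℂ :=
  of fun ij k => V k ij.1 ij.2

theorem krausEntries_mul_diagonal_mul_conjTranspose [DecidableEq ι] [DecidableEq p]
    (w : ι → ℂ) (V : ι → Matrix p m ℂ) (c : ℂ)
    (h : ∀ ρ : Matrix m m ℂ, ρ.PosSemidef → ρ.trace = 1 → weightedKrausMap w V ρ = c • 1) :
    krausEntries V * diagonal w * (krausEntries V)ᴴ = c • (1 : Matrix (p × m) (p × m) ℂ) := by
  ext ⟨i, j⟩ ⟨i', j'⟩
  have hentry := congr_fun₂ (apply_eq_trace_smul_of_density _ _ h (single j j' 1)) i i'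
  simp only [weightedKrausMap, LinearMap.coe_mk, AddHom.coe_mk, sum_apply, smul_apply,
    mul_single_one_mul_conjTranspose_apply, trace_single] at hentry
  rw [mul_apply]
  simp only [mul_diagonal, conjTranspose_apply, krausEntries, of_apply, smul_apply,
    smul_eq_mul] at hentry ⊢
  convert hentry using 1
  · exact Finset.sum_congr rfl fun k _ => by ring
  · by_cases hi : i = i' <;> by_cases hj : j = j' <;> simp [one_apply, hi, hj]

end Matrix

theorem mixed_unitary_depolarizing_lower_bound_general (D n : ℕ)
    (w : Fin n → ℝ)
    (V : Fin n → Matrix (Fin D) (Fin D) ℂ)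
    (h : ∀ ρ : Matrix (Fin D) (Fin D) ℂ, ρ.PosSemidef → ρ.trace = 1 →
      ∑ k, (w k : ℂ) • (V k * ρ * (V k)ᴴ)
        = ((D : ℂ))⁻¹ • (1 : Matrix (Fin D) (Fin D) ℂ)) :
    D ^ 2 ≤ n := by
  rcases Nat.eq_zero_or_pos D with rfl | hD
  · simp
  have hA := krausEntries_mul_diagonal_mul_conjTranspose (fun k => (w k : ℂ)) V _ h
  rw [Matrix.mul_assoc] at hA
  simpa [sq] using card_le_card_of_mul_eq_smul_one (inv_ne_zero (Nat.cast_ne_zero.2 hD.ne')) hA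

/-- Any mixed-unitary quantum channel `ρ ↦ ∑_k w_k V_k ρ V_k†` on a `D`-dimensional system
(with weights `w_k > 0` summing to `1`) that maps every density operator to the maximally
mixed state `I/D` must use at least `D²` unitaries. -/
theorem mixed_unitary_depolarizing_lower_bound (D n : ℕ)
    (w : Fin n → ℝ) (hw0 : ∀ k, 0 < w k) (hw1 : ∑ k, w k = 1)
    (V : Fin n → Matrix (Fin D) (Fin D) ℂ)
    (hV : ∀ k, V k ∈ Matrix.unitaryGroup (Fin D) ℂ)
    (h : ∀ ρ : Matrix (Fin D) (Fin D) ℂ, ρ.PosSemidef → ρ.trace = 1 →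
      ∑ k, (w k : ℂ) • (V k * ρ * (V k)ᴴ)
        = ((D : ℂ))⁻¹ • (1 : Matrix (Fin D) (Fin D) ℂ)) :
    D ^ 2 ≤ n :=
  mixed_unitary_depolarizing_lower_bound_general D n w V h
end
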